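/- arXiv:2208.06236 — 5 statements merged into one kernel-verified Lean document; each statement's English description precedes it below -/
import Mathlib

section
/- Let H be a Borel probability measure on ℝ, let n ≥ 1, and let ε > 0. Then there exist x, x' ∈ ℝⁿ differing in exactly one coordinate such that ∫_ℝ (F̂_x(t) − F̂_{x'}(t))² dH(t) ≥ 1/n² − ε. Consequently, the base sensitivity of the Cramér–von Mises distance d_CvM^H equals 1/n. -/
open MeasureTheory Filter

/-- Empirical cdf of a sample `x : Fin n → ℝ`. -/
noncomputable def ecdf {n : ℕ} (x : Fin n → ℝ) (t : ℝ) : ℝ :=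
  (Finset.univ.filter (fun i => x i ≤ t)).card / n

/-- Cramér–von Mises distance with base measure `H`. -/
noncomputable def dCvM (H : Measure ℝ) (F G : ℝ → ℝ) : ℝ :=
  Real.sqrt (∫ t, (F t - G t) ^ 2 ∂H)

/-!
Changing one sample point moves the empirical cdf by at most `1/n` at every `t`, so
`d_CvM ≤ 1/n`. Conversely, if all `n` points sit at `-k` and one of them is moved to `k`, the
two empirical cdfs differ by exactly `1/n` on `[-k, k)` and agree elsewhere, so the squared
distance is `H([-k, k)) / n²`, which tends to `1/n²` as `k → ∞`.
-/

open Set Function Topology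

lemma hammingDist_update_self_of_ne {ι β : Type*} [Fintype ι] [DecidableEq ι] [DecidableEq β]
    (x : ι → β) {i : ι} {b : β} (h : b ≠ x i) : hammingDist x (update x i b) = 1 := by
  rw [hammingDist, Finset.card_eq_one]
  refine ⟨i, Finset.eq_singleton_iff_unique_mem.2 ⟨by simpa using h.symm, fun j hj => ?_⟩⟩
  by_contra hji
  simp [update_of_ne hji] at hj

lemma tendsto_measureReal_Ico_neg_natCast (μ : Measure ℝ) [IsFiniteMeasure μ] :
    Tendsto (fun k : ℕ => μ.real (Ico (-k : ℝ) k)) atTop (𝓝 (μ.real univ)) := by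
  have hmono : Monotone fun k : ℕ => Ico (-k : ℝ) k := fun i j hij =>
    Ico_subset_Ico (by simpa using hij) (by simpa using hij)
  have hunion : ⋃ k : ℕ, Ico (-k : ℝ) k = univ := by
    refine iUnion_eq_univ_iff.2 fun t => ?_
    obtain ⟨k, hk⟩ := exists_nat_gt |t|
    exact ⟨k, (abs_lt.1 hk).1.le, (abs_lt.1 hk).2⟩
  have := tendsto_measure_iUnion_atTop (μ := μ) hmono
  rw [hunion] at this
  exact (ENNReal.tendsto_toReal (measure_ne_top μ univ)).comp this

section Ecdf

variable {n : ℕ}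

lemma ecdf_eq_sum (x : Fin n → ℝ) (t : ℝ) :
    ecdf x t = (∑ i, if x i ≤ t then (1 : ℝ) else 0) / n := by
  simp [ecdf, Finset.sum_boole]

lemma abs_ecdf_sub_ecdf_le (x x' : Fin n → ℝ) (t : ℝ) :
    |ecdf x t - ecdf x' t| ≤ hammingDist x x' / n := by
  rw [ecdf_eq_sum, ecdf_eq_sum, ← sub_div, ← Finset.sum_sub_distrib, abs_div, Nat.abs_cast]
  gcongr
  calc |∑ i, ((if x i ≤ t then (1 : ℝ) else 0) - if x' i ≤ t then 1 else 0)|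
      ≤ ∑ i, |(if x i ≤ t then (1 : ℝ) else 0) - if x' i ≤ t then 1 else 0| :=
        Finset.abs_sum_le_sum_abs _ _
    _ ≤ ∑ i, if x i ≠ x' i then (1 : ℝ) else 0 := by
        gcongr with i
        by_cases hi : x i = x' i
        · simp [hi]
        · simp only [hi, ne_eq, not_false_eq_true, if_true]
          split_ifs <;> norm_num
    _ = hammingDist x x' := by rw [Finset.sum_boole]; rfl

lemma integral_sq_ecdf_sub_ecdf_le (H : Measure ℝ) [IsProbabilityMeasure H]
    (x x' : Fin n → ℝ) :
    ∫ t, (ecdf x t - ecdf x' t) ^ 2 ∂H ≤ (hammingDist x x' / n : ℝ) ^ 2 := by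
  calc ∫ t, (ecdf x t - ecdf x' t) ^ 2 ∂H ≤ ∫ _, (hammingDist x x' / n : ℝ) ^ 2 ∂H :=
        integral_mono_of_nonneg (.of_forall fun _ => sq_nonneg _) (integrable_const _)
          (.of_forall fun t => (sq_abs _).symm.trans_le <|
            pow_le_pow_left₀ (abs_nonneg _) (abs_ecdf_sub_ecdf_le x x' t) 2)
    _ = (hammingDist x x' / n : ℝ) ^ 2 := by simp

lemma dCvM_ecdf_le (H : Measure ℝ) [IsProbabilityMeasure H] (x x' : Fin n → ℝ) :
    dCvM H (ecdf x) (ecdf x') ≤ hammingDist x x' / n :=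
  (Real.sqrt_le_sqrt (integral_sq_ecdf_sub_ecdf_le H x x')).trans_eq
    (Real.sqrt_sq (by positivity))

lemma ecdf_sub_ecdf_update (x : Fin n → ℝ) (i : Fin n) (b t : ℝ) :
    ecdf x t - ecdf (update x i b) t
      = ((if x i ≤ t then (1 : ℝ) else 0) - if b ≤ t then 1 else 0) / n := by
  rw [ecdf_eq_sum, ecdf_eq_sum, ← sub_div, ← Finset.sum_sub_distrib,
    Finset.sum_eq_single i (fun j _ hj => by simp [update_of_ne hj]) (by simp)]
  simp

lemma sq_ecdf_sub_ecdf_update (x : Fin n → ℝ) (i : Fin n) {b : ℝ} (h : x i ≤ b) (t : ℝ) :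
    (ecdf x t - ecdf (update x i b) t) ^ 2
      = (Ico (x i) b).indicator (fun _ => 1 / (n : ℝ) ^ 2) t := by
  rw [ecdf_sub_ecdf_update]
  by_cases ha : x i ≤ t <;> by_cases hb : b ≤ t <;> simp [indicator, ha, hb, div_pow]
  linarith

lemma integral_sq_ecdf_sub_ecdf_update (H : Measure ℝ) (x : Fin n → ℝ) (i : Fin n) {b : ℝ}
    (h : x i ≤ b) :
    ∫ t, (ecdf x t - ecdf (update x i b) t) ^ 2 ∂H = H.real (Ico (x i) b) / n ^ 2 := by
  simp_rw [sq_ecdf_sub_ecdf_update x i h]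
  rw [integral_indicator_const _ measurableSet_Ico, smul_eq_mul, mul_one_div]

end Ecdf

theorem cvm_base_sensitivity_eq {n : ℕ} (hn : 1 ≤ n)
    (H : Measure ℝ) [IsProbabilityMeasure H] (ε : ℝ) (hε : 0 < ε) :
    (∃ x x' : Fin n → ℝ, hammingDist x x' = 1 ∧
      ∫ t, (ecdf x t - ecdf x' t) ^ 2 ∂H ≥ 1 / (n : ℝ) ^ 2 - ε) ∧
    sSup {d : ℝ | ∃ x x' : Fin n → ℝ, hammingDist x x' ≤ 1 ∧
      d = dCvM H (ecdf x) (ecdf x')} = 1 / n := by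
  let i₀ : Fin n := ⟨0, hn⟩
  let x : ℕ → Fin n → ℝ := fun k _ => -k
  let x' : ℕ → Fin n → ℝ := fun k => update (x k) i₀ k
  have hdist : ∀ᶠ k in atTop, hammingDist (x k) (x' k) = 1 :=
    (eventually_gt_atTop 0).mono fun k hk =>
      hammingDist_update_self_of_ne (x k) (by simp [x]; positivity)
  have hint : Tendsto (fun k => ∫ t, (ecdf (x k) t - ecdf (x' k) t) ^ 2 ∂H) atTop
      (𝓝 ((1 / n : ℝ) ^ 2)) := by
    simp_rw [x', integral_sq_ecdf_sub_ecdf_update H (x _) i₀ (neg_le_self (Nat.cast_nonneg _))]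
    simpa using (tendsto_measureReal_Ico_neg_natCast H).div_const ((n : ℝ) ^ 2)
  have hgap : 1 / (n : ℝ) ^ 2 - ε < (1 / n) ^ 2 := by rw [div_pow, one_pow]; linarith
  obtain ⟨k, hk, hk'⟩ := (hdist.and (hint.eventually_const_lt hgap)).exists
  refine ⟨⟨x k, x' k, hk, hk'.le⟩,
    (isLUB_of_mem_closure ?_ ?_).csSup_eq ⟨_, 0, 0, by simp, rfl⟩⟩
  · rintro _ ⟨y, y', hyy', rfl⟩
    exact (dCvM_ecdf_le H y y').trans (by gcongr; exact_mod_cast hyy')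
  · rw [← Real.sqrt_sq (by positivity : (0 : ℝ) ≤ 1 / n)]
    exact mem_closure_of_tendsto hint.sqrt (hdist.mono fun k hk => ⟨x k, x' k, hk.le, rfl⟩)
end

section
/- Let n ≥ 1 and let x, x' ∈ ℝⁿ differ in exactly one coordinate (there is exactly one index i with x_i ≠ x'_i). Then the Kuiper distance between their empirical cdfs satisfies d_K(F̂_x, F̂_{x'}) = 1/n; in particular, the base sensitivity of d_K is 1/n. -/
open Filter

/-- Kuiper distance. -/
noncomputable def dK (F G : ℝ → ℝ) : ℝ :=
  (⨆ t : ℝ, (F t - G t)) + (⨆ s : ℝ, (G s - F s))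

lemma ecdf_sub {n : ℕ} (x x' : Fin n → ℝ) (i₀ : Fin n)
    (hoff : ∀ j, j ≠ i₀ → x j = x' j) (t : ℝ) :
    ecdf x t - ecdf x' t =
      ((if x i₀ ≤ t then (1:ℝ) else 0) - (if x' i₀ ≤ t then 1 else 0)) / n := by
  have key : ∀ y : Fin n → ℝ,
      ((Finset.univ.filter (fun i => y i ≤ t)).card : ℝ) =
        (((Finset.univ.erase i₀).filter (fun i => y i ≤ t)).card : ℝ) +
          (if y i₀ ≤ t then 1 else 0) := by
    intro y
    conv_lhs => rw [← Finset.insert_erase (Finset.mem_univ i₀)]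
    rw [Finset.filter_insert]
    by_cases h : y i₀ ≤ t
    · rw [if_pos h, if_pos h, Finset.card_insert_of_notMem (by simp)]
      push_cast; ring
    · rw [if_neg h, if_neg h]; simp
  have hcong : (Finset.univ.erase i₀).filter (fun i => x i ≤ t)
      = (Finset.univ.erase i₀).filter (fun i => x' i ≤ t) := by
    apply Finset.filter_congr
    intro j hj
    rw [hoff j (Finset.ne_of_mem_erase hj)]
  simp only [ecdf, key, hcong]
  ring

lemma sup_pair {n : ℕ} (hn : 1 ≤ n) (x x' : Fin n → ℝ) (i₀ : Fin n)
    (hlt : x i₀ < x' i₀) (hoff : ∀ j, j ≠ i₀ → x j = x' j) :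
    (⨆ t : ℝ, (ecdf x t - ecdf x' t)) = 1 / n ∧
    (⨆ s : ℝ, (ecdf x' s - ecdf x s)) = 0 := by
  have hn0 : (0:ℝ) < n := by exact_mod_cast hn
  have hdiff := ecdf_sub x x' i₀ hoff
  have hle : ∀ t, ecdf x t - ecdf x' t ≤ 1 / n := by
    intro t; rw [hdiff t]
    apply div_le_div_of_nonneg_right ?_ hn0.le
    split <;> split <;> norm_num
  have hge : ∀ t, 0 ≤ ecdf x t - ecdf x' t := by
    intro t; rw [hdiff t]
    apply div_nonneg ?_ hn0.le
    by_cases h : x' i₀ ≤ t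
    · rw [if_pos h, if_pos (le_trans hlt.le h)]; norm_num
    · rw [if_neg h]; split <;> norm_num
  have hval : ecdf x (x i₀) - ecdf x' (x i₀) = 1 / n := by
    rw [hdiff, if_pos le_rfl, if_neg (not_le.mpr hlt)]; norm_num
  have hval' : ecdf x' (x' i₀) - ecdf x (x' i₀) = 0 := by
    have := hdiff (x' i₀)
    rw [if_pos hlt.le, if_pos le_rfl] at this
    norm_num at this
    linarith [this]
  constructor
  · refine le_antisymm (ciSup_le hle) ?_
    have := le_ciSup (f := fun t => ecdf x t - ecdf x' t)
      ⟨1 / n, by rintro _ ⟨t, rfl⟩; exact hle t⟩ (x i₀)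
    rwa [hval] at this
  · refine le_antisymm (ciSup_le (fun s => (by linarith [hge s] : ecdf x' s - ecdf x s ≤ 0))) ?_
    have := le_ciSup (f := fun s => ecdf x' s - ecdf x s)
      ⟨0, by rintro _ ⟨s, rfl⟩; exact (by linarith [hge s] : ecdf x' s - ecdf x s ≤ 0)⟩ (x' i₀)
    rwa [hval'] at this

lemma dK_eq_of_hamming_one {n : ℕ} (hn : 1 ≤ n) (x x' : Fin n → ℝ)
    (h : hammingDist x x' = 1) : dK (ecdf x) (ecdf x') = 1 / n := by
  rw [hammingDist, Finset.card_eq_one] at h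
  obtain ⟨i₀, hi₀⟩ := h
  have hne : x i₀ ≠ x' i₀ := by
    have : i₀ ∈ Finset.univ.filter (fun i => x i ≠ x' i) := by
      rw [hi₀]; exact Finset.mem_singleton_self i₀
    simpa using this
  have hoff : ∀ j, j ≠ i₀ → x j = x' j := by
    intro j hj
    by_contra hc
    have : j ∈ Finset.univ.filter (fun i => x i ≠ x' i) := by simpa using hc
    rw [hi₀, Finset.mem_singleton] at this
    exact hj this
  rcases lt_or_gt_of_ne hne with hlt | hgt
  · obtain ⟨h1, h2⟩ := sup_pair hn x x' i₀ hlt hoff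
    rw [dK, h1, h2, add_zero]
  · have hoff' : ∀ j, j ≠ i₀ → x' j = x j := fun j hj => (hoff j hj).symm
    obtain ⟨h1, h2⟩ := sup_pair hn x' x i₀ hgt hoff'
    rw [dK, h1, h2, zero_add]

theorem kuiper_base_sensitivity_eq {n : ℕ} (hn : 1 ≤ n) :
    (∀ x x' : Fin n → ℝ, hammingDist x x' = 1 →
      dK (ecdf x) (ecdf x') = 1 / n) ∧
    sSup {d : ℝ | ∃ x x' : Fin n → ℝ, hammingDist x x' ≤ 1 ∧
      d = dK (ecdf x) (ecdf x')} = 1 / n := by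
  have hn0 : (0:ℝ) < n := by exact_mod_cast hn
  refine ⟨fun x x' h => dK_eq_of_hamming_one hn x x' h, ?_⟩
  have hdK_self : ∀ x : Fin n → ℝ, dK (ecdf x) (ecdf x) = 0 := by
    intro x
    have : ∀ t : ℝ, ecdf x t - ecdf x t = 0 := fun t => sub_self _
    simp only [dK, this, ciSup_const, add_zero]
  -- witness with hamming distance 1
  have hFin : 0 < n := hn
  set i₀ : Fin n := ⟨0, hFin⟩
  set x : Fin n → ℝ := fun _ => 0 with hx
  set x' : Fin n → ℝ := Function.update x i₀ 1 with hx'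
  have hham : hammingDist x x' = 1 := by
    rw [hammingDist]
    have : Finset.univ.filter (fun i => x i ≠ x' i) = {i₀} := by
      ext j
      simp only [Finset.mem_filter, Finset.mem_univ, true_and, Finset.mem_singleton]
      constructor
      · intro hj
        by_contra hc
        exact hj (by rw [hx', Function.update_of_ne hc])
      · rintro rfl
        rw [hx', Function.update_self, hx]
        norm_num
    rw [this, Finset.card_singleton]
  have hmem : (1 / n : ℝ) ∈ {d : ℝ | ∃ x x' : Fin n → ℝ, hammingDist x x' ≤ 1 ∧
      d = dK (ecdf x) (ecdf x')} :=
    ⟨x, x', le_of_eq hham, (dK_eq_of_hamming_one hn x x' hham).symm⟩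
  have hub : ∀ d ∈ {d : ℝ | ∃ x x' : Fin n → ℝ, hammingDist x x' ≤ 1 ∧
      d = dK (ecdf x) (ecdf x')}, d ≤ 1 / n := by
    rintro d ⟨y, y', hh, rfl⟩
    interval_cases h : hammingDist y y'
    · have : y = y' := hammingDist_eq_zero.mp h
      rw [this, hdK_self]
      positivity
    · exact le_of_eq (dK_eq_of_hamming_one hn y y' h)
  refine le_antisymm (Real.sSup_le hub (by positivity)) (le_csSup ⟨1 / n, hub⟩ hmem)
end

section
/- Fix a bounded function F₀ : ℝ → ℝ and n ≥ 1, and define T(x) = inf_{(m,s) ∈ ℝ×(0,∞)} sup_{t∈ℝ} |F̂_x(t) − F₀((t−m)/s)| for x ∈ ℝⁿ; assume T : ℝⁿ → ℝ is Borel measurable. Let μ be a Borel probability measure on ℝ, let m₀ ∈ ℝ and s₀ > 0, and let μ' be the pushforward of μ under the map t ↦ s₀·t + m₀. Then the pushforward of the n-fold product measure μ^{⊗n} under T equals the pushforward of (μ')^{⊗n} under T; i.e., the distribution of T under i.i.d. sampling is the same for all members of the location-scale family generated by μ. -/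
open MeasureTheory Filter

/-- Minimum Kolmogorov–Smirnov statistic over the location-scale family generated by `F₀`. -/
noncomputable def minKS {n : ℕ} (F₀ : ℝ → ℝ) (x : Fin n → ℝ) : ℝ :=
  ⨅ m : ℝ, ⨅ s : Set.Ioi (0 : ℝ), ⨆ t : ℝ, |ecdf x t - F₀ ((t - m) / (s : ℝ))|

/-! A positive affine change of the sample is undone by the same change of the location and scale
parameters and of the argument `t`, so `minKS` is invariant; the distribution of `minKS` under an
i.i.d. sample from the transformed law is therefore that under the original law. -/

theorem MeasureTheory.Measure.map_pi_map_eq_map_comp {ι α β γ : Type*} [Fintype ι]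
    [MeasurableSpace α] [MeasurableSpace β] [MeasurableSpace γ] {μ : ι → Measure α} {g : α → β}
    [∀ i, SigmaFinite ((μ i).map g)] (hg : Measurable g) {T : (ι → β) → γ} (hT : Measurable T) :
    (Measure.pi fun i => (μ i).map g).map T = (Measure.pi μ).map fun x => T fun i => g (x i) := by
  rw [← Measure.pi_map_pi fun _ => hg.aemeasurable, Measure.map_map hT (by fun_prop)]
  rfl

theorem ecdf_comp_of_strictMono {n : ℕ} {f : ℝ → ℝ} (hf : StrictMono f) (x : Fin n → ℝ) (t : ℝ) :
    ecdf (fun i => f (x i)) (f t) = ecdf x t := by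
  simp only [ecdf, hf.le_iff_le]

theorem minKS_affine {n : ℕ} (F₀ : ℝ → ℝ) (x : Fin n → ℝ) {a : ℝ} (b : ℝ) (ha : 0 < a) :
    minKS F₀ (fun i => a * x i + b) = minKS F₀ x := by
  have haffine : Function.Surjective fun t : ℝ => a * t + b := fun y =>
    ⟨(y - b) / a, by field_simp; ring⟩
  have hscale : Function.Surjective fun s : Set.Ioi (0 : ℝ) =>
      (⟨a * s, mul_pos ha s.2⟩ : Set.Ioi (0 : ℝ)) := fun s =>
    ⟨⟨s / a, div_pos s.2 ha⟩, Subtype.ext (mul_div_cancel₀ _ ha.ne')⟩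
  unfold minKS
  rw [← haffine.iInf_comp]
  refine iInf_congr fun m => ?_
  rw [← hscale.iInf_comp]
  refine iInf_congr fun s => ?_
  rw [← haffine.iSup_comp]
  refine iSup_congr fun t => ?_
  have hs : (0 : ℝ) < s := s.2
  have harg : (a * t + b - (a * m + b)) / (a * s) = (t - m) / s := by
    field_simp
    ring
  simp only [harg]
  rw [ecdf_comp_of_strictMono ((strictMono_mul_left_of_pos ha).add_const b) x t]

theorem minKS_distribution_free_general {n : ℕ}
    (F₀ : ℝ → ℝ)
    (hTmeas : Measurable (minKS (n := n) F₀))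
    (μ : Measure ℝ) [IsProbabilityMeasure μ] (m₀ : ℝ) (s₀ : ℝ) (hs₀ : 0 < s₀) :
    Measure.map (minKS F₀) (Measure.pi fun _ : Fin n => μ) =
      Measure.map (minKS F₀)
        (Measure.pi fun _ : Fin n => Measure.map (fun t => s₀ * t + m₀) μ) := by
  rw [Measure.map_pi_map_eq_map_comp (by fun_prop) hTmeas]
  simp only [minKS_affine F₀ _ m₀ hs₀]

theorem minKS_distribution_free {n : ℕ} (hn : 1 ≤ n)
    (F₀ : ℝ → ℝ) (hF₀ : ∃ C : ℝ, ∀ t, |F₀ t| ≤ C)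
    (hTmeas : Measurable (minKS (n := n) F₀))
    (μ : Measure ℝ) [IsProbabilityMeasure μ] (m₀ : ℝ) (s₀ : ℝ) (hs₀ : 0 < s₀) :
    Measure.map (minKS F₀) (Measure.pi fun _ : Fin n => μ) =
      Measure.map (minKS F₀)
        (Measure.pi fun _ : Fin n => Measure.map (fun t => s₀ * t + m₀) μ) :=
  minKS_distribution_free_general F₀ hTmeas μ m₀ s₀ hs₀
end

section
/- Let n ≥ 1, let 𝓕 be a nonempty set of functions ℝ → ℝ taking values in [0,1], and define the goodness-of-fit statistic T(x) = inf_{G ∈ 𝓕} sup_{t∈ℝ} |F̂_x(t) − G(t)| for x ∈ ℝⁿ. Then for any x, x' ∈ ℝⁿ differing in at most one coordinate, |T(x) − T(x')| ≤ 1/n; i.e., the sensitivity of the minimum Kolmogorov–Smirnov goodness-of-fit statistic is at most 1/n. -/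
open Filter

/-- Minimum Kolmogorov–Smirnov goodness-of-fit statistic over a family `𝓕`. -/
noncomputable def gofKS {n : ℕ} (𝓕 : Set (ℝ → ℝ)) (x : Fin n → ℝ) : ℝ :=
  ⨅ G : 𝓕, ⨆ t : ℝ, |ecdf x t - (G : ℝ → ℝ) t|

lemma ecdf_mem_Icc {n : ℕ} (hn : 1 ≤ n) (x : Fin n → ℝ) (t : ℝ) :
    ecdf x t ∈ Set.Icc (0 : ℝ) 1 := by
  have hnpos : (0 : ℝ) < n := by positivity
  constructor
  · unfold ecdf; positivity
  · unfold ecdf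
    rw [div_le_one hnpos]
    exact_mod_cast (Finset.card_filter_le _ _).trans (by simp)

lemma ecdf_close {n : ℕ} (hn : 1 ≤ n) (x x' : Fin n → ℝ)
    (hadj : hammingDist x x' ≤ 1) (t : ℝ) :
    |ecdf x t - ecdf x' t| ≤ 1 / n := by
  have hnpos : (0 : ℝ) < n := by positivity
  set A := Finset.univ.filter (fun i => x i ≤ t) with hA
  set A' := Finset.univ.filter (fun i => x' i ≤ t) with hA'
  set D := Finset.univ.filter (fun i => x i ≠ x' i) with hD
  have hDcard : D.card ≤ 1 := hadj
  have key : ∀ (B B' : Finset (Fin n)),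
      B = Finset.univ.filter (fun i => x i ≤ t) →
      B' = Finset.univ.filter (fun i => x' i ≤ t) →
      B.card ≤ B'.card + 1 := by
    intro B B' hB hB'
    have hsub : B ⊆ B' ∪ D := by
      intro i hi
      simp only [hB, hB', hD, Finset.mem_filter, Finset.mem_univ, true_and,
        Finset.mem_union] at hi ⊢
      by_cases h : x i = x' i
      · left; rwa [← h]
      · right; exact h
    calc B.card ≤ (B' ∪ D).card := Finset.card_le_card hsub
      _ ≤ B'.card + D.card := Finset.card_union_le _ _
      _ ≤ B'.card + 1 := by omega
  have h1 : A.card ≤ A'.card + 1 := key A A' hA hA'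
  have hD' : (Finset.univ.filter (fun i => x' i ≠ x i)).card ≤ 1 := by
    have : (Finset.univ.filter (fun i => x' i ≠ x i)) = D := by
      ext i; simp [hD, ne_comm]
    rw [this]; exact hDcard
  have h2 : A'.card ≤ A.card + 1 := by
    have hsub : A' ⊆ A ∪ (Finset.univ.filter (fun i => x' i ≠ x i)) := by
      intro i hi
      simp only [hA, hA', Finset.mem_filter, Finset.mem_univ, true_and,
        Finset.mem_union] at hi ⊢
      by_cases h : x' i = x i
      · left; rwa [← h]
      · right; exact h
    calc A'.card ≤ _ := Finset.card_le_card hsub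
      _ ≤ A.card + (Finset.univ.filter (fun i => x' i ≠ x i)).card :=
        Finset.card_union_le _ _
      _ ≤ A.card + 1 := by omega
  unfold ecdf
  rw [div_sub_div_same, abs_div, abs_of_pos hnpos]
  gcongr ?_ / _
  rw [abs_sub_le_iff]
  constructor
  · have : (A.card : ℝ) ≤ A'.card + 1 := by exact_mod_cast h1
    linarith
  · have : (A'.card : ℝ) ≤ A.card + 1 := by exact_mod_cast h2
    linarith

lemma sup_bddAbove {n : ℕ} (hn : 1 ≤ n) (x : Fin n → ℝ) (G : ℝ → ℝ)
    (hG : ∀ t, G t ∈ Set.Icc (0 : ℝ) 1) :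
    BddAbove (Set.range fun t : ℝ => |ecdf x t - G t|) := by
  refine ⟨1, ?_⟩
  rintro _ ⟨t, rfl⟩
  have h1 := ecdf_mem_Icc hn x t
  have h2 := hG t
  rw [abs_sub_le_iff]
  constructor <;> [linarith [h1.2, h2.1]; linarith [h1.1, h2.2]]

lemma gofKS_le {n : ℕ} (hn : 1 ≤ n) (𝓕 : Set (ℝ → ℝ))
    (h𝓕ne : 𝓕.Nonempty) (h𝓕 : ∀ G ∈ 𝓕, ∀ t, G t ∈ Set.Icc (0 : ℝ) 1)
    (x x' : Fin n → ℝ) (hadj : hammingDist x x' ≤ 1) :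
    gofKS 𝓕 x - 1 / n ≤ gofKS 𝓕 x' := by
  have hne : Nonempty 𝓕 := h𝓕ne.to_subtype
  conv_rhs => rw [gofKS]
  apply le_ciInf
  intro G
  rw [sub_le_iff_le_add]
  have hG := h𝓕 G G.2
  have hbdd' := sup_bddAbove hn x' G hG
  have hstep : (⨆ t : ℝ, |ecdf x t - (G : ℝ → ℝ) t|) ≤
      (⨆ t : ℝ, |ecdf x' t - (G : ℝ → ℝ) t|) + 1 / n := by
    apply ciSup_le
    intro t
    have h1 : |ecdf x t - (G : ℝ → ℝ) t| ≤ |ecdf x' t - (G : ℝ → ℝ) t| + 1 / n := by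
      have := ecdf_close hn x x' hadj t
      have h2 : |ecdf x t - (G : ℝ → ℝ) t| ≤
          |ecdf x t - ecdf x' t| + |ecdf x' t - (G : ℝ → ℝ) t| := abs_sub_le _ _ _
      linarith
    exact h1.trans (by gcongr; exact le_ciSup hbdd' t)
  refine le_trans ?_ hstep
  have hbb : BddBelow (Set.range fun H : 𝓕 => ⨆ t : ℝ, |ecdf x t - (H : ℝ → ℝ) t|) := by
    refine ⟨0, ?_⟩
    rintro _ ⟨H, rfl⟩
    exact le_ciSup_of_le (sup_bddAbove hn x H (h𝓕 H H.2)) 0 (abs_nonneg _)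
  exact ciInf_le hbb G

theorem gofKS_sensitivity {n : ℕ} (hn : 1 ≤ n) (𝓕 : Set (ℝ → ℝ))
    (h𝓕ne : 𝓕.Nonempty) (h𝓕 : ∀ G ∈ 𝓕, ∀ t, G t ∈ Set.Icc (0 : ℝ) 1)
    (x x' : Fin n → ℝ) (hadj : hammingDist x x' ≤ 1) :
    |gofKS 𝓕 x - gofKS 𝓕 x'| ≤ 1 / n := by
  have h1 := gofKS_le hn 𝓕 h𝓕ne h𝓕 x x' hadj
  have h2 := gofKS_le hn 𝓕 h𝓕ne h𝓕 x' x (by rwa [hammingDist_comm])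
  rw [abs_sub_le_iff]
  constructor <;> linarith
end

section
/- Let n ≥ 1, let 𝓕 be a nonempty set of functions ℝ → ℝ taking values in [0,1], and define the goodness-of-fit statistic T_K(x) = inf_{G ∈ 𝓕} [ (sup_{t∈ℝ} (F̂_x(t) − G(t))) + (sup_{s∈ℝ} (G(s) − F̂_x(s))) ] for x ∈ ℝⁿ. Then for any x, x' ∈ ℝⁿ differing in at most one coordinate, |T_K(x) − T_K(x')| ≤ 1/n; i.e., the sensitivity of the minimum Kuiper goodness-of-fit statistic is at most 1/n. -/
open Filter

/-- Minimum Kuiper goodness-of-fit statistic over a family `𝓕`. -/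
noncomputable def gofKuiper {n : ℕ} (𝓕 : Set (ℝ → ℝ)) (x : Fin n → ℝ) : ℝ :=
  ⨅ G : 𝓕, ((⨆ t : ℝ, (ecdf x t - (G : ℝ → ℝ) t)) +
            (⨆ s : ℝ, ((G : ℝ → ℝ) s - ecdf x s)))

/-!
Moving one sample point from `xᵢ` to `xᵢ' ≥ xᵢ` can only lower the empirical cdf, and by at most
`1/n`: `F̂_{x'} ≤ F̂_x ≤ F̂_{x'} + 1/n`. Hence, for every `G`, one of the two suprema in the Kuiper
distance moves by at most `1/n` while the other does not increase, so the Kuiper distance to each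
`G`, and therefore its infimum over `𝓕`, changes by at most `1/n` (not `2/n`).
-/

open Set

noncomputable def kuiperDist (F G : ℝ → ℝ) : ℝ :=
  (⨆ t, F t - G t) + ⨆ s, G s - F s

lemma bddAbove_range_sub {F G : ℝ → ℝ} {a b : ℝ} (hF : ∀ t, F t ≤ a) (hG : ∀ t, b ≤ G t) :
    BddAbove (range fun t => F t - G t) :=
  ⟨a - b, by rintro _ ⟨t, rfl⟩; linarith [hF t, hG t]⟩

section kuiperDist

variable {F F' G : ℝ → ℝ}

lemma kuiperDist_nonneg (h₁ : BddAbove (range fun t => F t - G t))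
    (h₂ : BddAbove (range fun s => G s - F s)) : 0 ≤ kuiperDist F G := by
  have := add_le_add (le_ciSup h₁ 0) (le_ciSup h₂ 0)
  rw [kuiperDist]
  linarith

lemma kuiperDist_le_add {a b : ℝ} (ha : ∀ t, F t ≤ F' t + a) (hb : ∀ t, F' t ≤ F t + b)
    (h₁ : BddAbove (range fun t => F' t - G t)) (h₂ : BddAbove (range fun s => G s - F' s)) :
    kuiperDist F G ≤ kuiperDist F' G + (a + b) := by
  have hsup₁ : (⨆ t, F t - G t) ≤ (⨆ t, F' t - G t) + a :=
    ciSup_le fun t => by linarith [ha t, le_ciSup h₁ t]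
  have hsup₂ : (⨆ s, G s - F s) ≤ (⨆ s, G s - F' s) + b :=
    ciSup_le fun s => by linarith [hb s, le_ciSup h₂ s]
  rw [kuiperDist, kuiperDist]
  linarith

end kuiperDist

section ecdf

variable {n : ℕ}

lemma ecdf_nonneg (x : Fin n → ℝ) (t : ℝ) : 0 ≤ ecdf x t := by
  unfold ecdf
  positivity

lemma ecdf_le_one (x : Fin n → ℝ) (t : ℝ) : ecdf x t ≤ 1 :=
  div_le_one_of_le₀ (by exact_mod_cast (Finset.card_filter_le _ _).trans_eq (Finset.card_fin n))
    n.cast_nonneg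

lemma ecdf_le_ecdf_of_le {x y : Fin n → ℝ} (hxy : x ≤ y) (t : ℝ) : ecdf y t ≤ ecdf x t := by
  unfold ecdf
  gcongr with i
  exact hxy i

lemma ecdf_le_ecdf_add_hammingDist (x y : Fin n → ℝ) (t : ℝ) :
    ecdf x t ≤ ecdf y t + hammingDist x y / n := by
  have hsub : ({i | x i ≤ t} : Finset (Fin n)) ⊆
      ({i | y i ≤ t} : Finset (Fin n)) ∪ ({i | x i ≠ y i} : Finset (Fin n)) := by
    intro i
    simp only [Finset.mem_filter, Finset.mem_univ, true_and, Finset.mem_union]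
    intro hi
    by_cases hxy : x i = y i
    · exact Or.inl (hxy ▸ hi)
    · exact Or.inr hxy
  have hcard := (Finset.card_le_card hsub).trans (Finset.card_union_le _ _)
  unfold ecdf
  rw [← add_div]
  gcongr
  exact_mod_cast hcard

end ecdf

lemma le_or_ge_of_hammingDist_le_one {ι β : Type*} [Fintype ι] [LinearOrder β] {x y : ι → β}
    (h : hammingDist x y ≤ 1) : x ≤ y ∨ y ≤ x := by
  by_contra! hne
  obtain ⟨⟨i, hi⟩, ⟨j, hj⟩⟩ : (∃ i, y i < x i) ∧ ∃ j, x j < y j := by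
    simpa [Pi.le_def] using hne
  have hij : i ≠ j := by
    rintro rfl
    exact lt_asymm hi hj
  have : 1 < hammingDist x y :=
    Finset.one_lt_card.mpr ⟨i, by simpa using hi.ne', j, by simpa using hj.ne, hij⟩
  omega

lemma gofKuiper_le_add {n : ℕ} {𝓕 : Set (ℝ → ℝ)} (h𝓕ne : 𝓕.Nonempty)
    (h𝓕 : ∀ G ∈ 𝓕, ∀ t, G t ∈ Icc (0 : ℝ) 1) {x x' : Fin n → ℝ} {a b : ℝ}
    (ha : ∀ t, ecdf x t ≤ ecdf x' t + a) (hb : ∀ t, ecdf x' t ≤ ecdf x t + b) :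
    gofKuiper 𝓕 x ≤ gofKuiper 𝓕 x' + (a + b) := by
  have := h𝓕ne.to_subtype
  have hbdd₁ (y : Fin n → ℝ) (G : 𝓕) : BddAbove (range fun t => ecdf y t - (G : ℝ → ℝ) t) :=
    bddAbove_range_sub (ecdf_le_one y) fun t => (h𝓕 G G.2 t).1
  have hbdd₂ (y : Fin n → ℝ) (G : 𝓕) : BddAbove (range fun s => (G : ℝ → ℝ) s - ecdf y s) :=
    bddAbove_range_sub (fun t => (h𝓕 G G.2 t).2) (ecdf_nonneg y)
  have hbddBelow : BddBelow (range fun G : 𝓕 => kuiperDist (ecdf x) G) :=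
    ⟨0, by rintro _ ⟨G, rfl⟩; exact kuiperDist_nonneg (hbdd₁ x G) (hbdd₂ x G)⟩
  exact le_ciInf_add fun G =>
    (ciInf_le hbddBelow G).trans (kuiperDist_le_add ha hb (hbdd₁ x' G) (hbdd₂ x' G))

theorem gofKuiper_sensitivity_general {n : ℕ} (𝓕 : Set (ℝ → ℝ))
    (h𝓕ne : 𝓕.Nonempty) (h𝓕 : ∀ G ∈ 𝓕, ∀ t, G t ∈ Set.Icc (0 : ℝ) 1)
    (x x' : Fin n → ℝ) (hadj : hammingDist x x' ≤ 1) :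
    |gofKuiper 𝓕 x - gofKuiper 𝓕 x'| ≤ 1 / n := by
  wlog hle : x ≤ x' generalizing x x'
  · rw [abs_sub_comm]
    exact this x' x (hammingDist_comm x x' ▸ hadj)
      ((le_or_ge_of_hammingDist_le_one hadj).resolve_left hle)
  have hlower (t : ℝ) : ecdf x' t ≤ ecdf x t + 0 := by
    simpa using ecdf_le_ecdf_of_le hle t
  have hupper (t : ℝ) : ecdf x t ≤ ecdf x' t + 1 / n :=
    (ecdf_le_ecdf_add_hammingDist x x' t).trans (by gcongr; exact_mod_cast hadj)
  rw [abs_sub_le_iff]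
  constructor
  · linarith [gofKuiper_le_add h𝓕ne h𝓕 hupper hlower]
  · linarith [gofKuiper_le_add h𝓕ne h𝓕 hlower hupper]

theorem gofKuiper_sensitivity {n : ℕ} (hn : 1 ≤ n) (𝓕 : Set (ℝ → ℝ))
    (h𝓕ne : 𝓕.Nonempty) (h𝓕 : ∀ G ∈ 𝓕, ∀ t, G t ∈ Set.Icc (0 : ℝ) 1)
    (x x' : Fin n → ℝ) (hadj : hammingDist x x' ≤ 1) :
    |gofKuiper 𝓕 x - gofKuiper 𝓕 x'| ≤ 1 / n :=
  gofKuiper_sensitivity_general 𝓕 h𝓕ne h𝓕 x x' hadj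
end
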